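/- arXiv:2410.20729 — 8 statements merged into one kernel-verified Lean document; each statement's English description precedes it below -/
import Mathlib

section
/- Let A be a divisible abelian group, J an index set, and {m_i}_{i∈I} a family of elements of the free abelian group ⊕_{j∈J} ℤ·x_j that is linearly independent over ℤ. Then for any family {a_i}_{i∈I} of elements of A, there exists a ℤ-module homomorphism f : ⊕_{j∈J} ℤ·x_j → A with f(m_i) = a_i for all i ∈ I. -/
/-!
A divisible abelian group is an injective `ℤ`-module, by Baer's criterion. A linearly independent
family is a basis of its span, so the prescribed values define a homomorphism on the span, and
injectivity extends it to the whole group.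
-/

theorem LinearIndependent.exists_linearMap_apply_eq {R M Q ι : Type*} [Ring R]
    [AddCommGroup M] [Module R M] [AddCommGroup Q] [Module R Q] (hQ : Module.Baer R Q)
    {v : ι → M} (hv : LinearIndependent R v) (a : ι → Q) :
    ∃ f : M →ₗ[R] Q, ∀ i, f (v i) = a i := by
  let g : Submodule.span R (Set.range v) →ₗ[R] Q := Finsupp.linearCombination R a ∘ₗ hv.repr
  obtain ⟨f, hf⟩ := hQ.extension_property _ (Submodule.injective_subtype _) g
  refine ⟨f, fun i => ?_⟩
  have hvi : v i ∈ Submodule.span R (Set.range v) := Submodule.subset_span ⟨i, rfl⟩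
  calc f (v i) = g ⟨v i, hvi⟩ := LinearMap.congr_fun hf ⟨v i, hvi⟩
    _ = a i := by simp [g, hv.repr_eq_single i ⟨v i, hvi⟩ rfl]

theorem Module.Baer.of_forall_exists_nsmul_eq {A : Type*} [AddCommGroup A]
    (hdiv : ∀ (a : A) (n : ℕ), 0 < n → ∃ b : A, n • b = a) : Module.Baer ℤ A :=
  letI : DivisibleBy A ℕ :=
    divisibleByOfSMulRightSurj A ℕ fun hn a => hdiv a _ (Nat.pos_of_ne_zero hn)
  letI : DivisibleBy A ℤ := AddGroup.divisibleByIntOfDivisibleByNat A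
  Module.Baer.of_divisible A

/-- Every nonsingular system of equations over a divisible abelian group
is solvable in the group itself. -/
theorem divisible_solvable {A : Type*} [AddCommGroup A]
    (hdiv : ∀ (a : A) (n : ℕ), 0 < n → ∃ b : A, n • b = a)
    {I J : Type*} (m : I → (J →₀ ℤ))
    (hli : LinearIndependent ℤ m) (a : I → A) :
    ∃ f : (J →₀ ℤ) →ₗ[ℤ] A, ∀ i, f (m i) = a i :=
  hli.exists_linearMap_apply_eq (Module.Baer.of_forall_exists_nsmul_eq hdiv) a
end

section
/- Let A be an abelian group of bounded exponent N ≥ 1 (N·a = 0 for all a ∈ A). Let {m_i}_{i∈I} be a family of elements of the free abelian group M = ⊕_{j∈J} ℤ·x_j such that for every prime p dividing N, the images of the m_i in M/pM are linearly independent over ℤ/p. Then for any family {a_i}_{i∈I} in A there exists a group homomorphism f : M → A with f(m_i) = a_i for all i. -/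
/-- Reduction modulo `q` of an element of the free abelian group `J →₀ ℤ`. -/
noncomputable def modRed (q : ℕ) {J : Type*} (v : J →₀ ℤ) : J →₀ ZMod q :=
  Finsupp.mapRange (Int.cast : ℤ → ZMod q) (by simp) v

/-!
Solvability of the system for every right-hand side is preserved under group extensions: solve
modulo a subgroup `H`, lift the solution along the free group `J →₀ ℤ`, and correct the error,
which lies in `H`, by a solution in `H`. A group of exponent `a * b` is an extension of the group
`a • A` of exponent `b` by `A ⧸ a • A` of exponent `a`, so by induction on `N` everything reduces
to exponent a prime `p`. There `A` is a vector space over `ZMod p`, and a solution is a linear map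
prescribed on the linearly independent reductions of the `m i` modulo `p`.
-/

universe u

theorem LinearIndependent.exists_linearMap_apply_eq_s4 {K V W ι : Type*} [Field K]
    [AddCommGroup V] [Module K V] [AddCommGroup W] [Module K W]
    {v : ι → V} (hv : LinearIndependent K v) (w : ι → W) :
    ∃ L : V →ₗ[K] W, ∀ i, L (v i) = w i := by
  obtain ⟨L, hL⟩ := LinearMap.exists_extend ((Module.Basis.span hv).constr K w)
  refine ⟨L, fun i => ?_⟩
  have := congr($hL (Module.Basis.span hv i))
  rwa [LinearMap.comp_apply, Module.Basis.constr_basis, Submodule.subtype_apply,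
    Module.Basis.span_apply] at this

theorem Finsupp.exists_addMonoidHom_lift {J A B : Type*} [AddCommGroup A] [AddCommGroup B]
    {π : A →+ B} (hπ : Function.Surjective π) (g : (J →₀ ℤ) →+ B) :
    ∃ f : (J →₀ ℤ) →+ A, π.comp f = g := by
  obtain ⟨f, hf⟩ := Module.projective_lifting_property π.toIntLinearMap g.toIntLinearMap hπ
  exact ⟨f.toAddMonoidHom, congr(LinearMap.toAddMonoidHom $hf)⟩

section SolvableIn

variable {I J : Type*} {m : I → (J →₀ ℤ)}

/-- A solution of the system `m i = a i` in `A` is a homomorphism `f` with `f (m i) = a i`,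
i.e. the choice of the values `f (single j 1)` of the unknowns. -/
def SolvableIn (A : Type*) [AddCommGroup A] (m : I → (J →₀ ℤ)) : Prop :=
  ∀ a : I → A, ∃ f : (J →₀ ℤ) →+ A, ∀ i, f (m i) = a i

theorem SolvableIn.of_addSubgroup {A : Type*} [AddCommGroup A] (H : AddSubgroup A)
    (hH : SolvableIn H m) (hQ : SolvableIn (A ⧸ H) m) : SolvableIn A m := by
  intro a
  obtain ⟨g, hg⟩ := hQ fun i => (a i : A ⧸ H)
  obtain ⟨f₁, hf₁⟩ := Finsupp.exists_addMonoidHom_lift (QuotientAddGroup.mk'_surjective H) g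
  have hmem : ∀ i, a i - f₁ (m i) ∈ H := fun i => by
    rw [← QuotientAddGroup.eq_zero_iff, QuotientAddGroup.mk_sub, ← hg i, ← hf₁]
    exact sub_self _
  obtain ⟨f₂, hf₂⟩ := hH fun i => ⟨a i - f₁ (m i), hmem i⟩
  exact ⟨f₁ + H.subtype.comp f₂, fun i => by simp [hf₂]⟩

theorem solvableIn_of_prime_nsmul_eq_zero {A : Type*} [AddCommGroup A] {p : ℕ} [Fact p.Prime]
    (hA : ∀ x : A, p • x = 0) (hm : LinearIndependent (ZMod p) (fun i => modRed p (m i))) :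
    SolvableIn A m := by
  let := AddCommGroup.zmodModule hA
  intro a
  obtain ⟨L, hL⟩ := hm.exists_linearMap_apply_eq_s4 a
  exact ⟨L.toAddMonoidHom.comp (Finsupp.mapRange.addMonoidHom (Int.castAddHom (ZMod p))), hL⟩

theorem solvableIn_of_mul_nsmul_eq_zero {A : Type u} [AddCommGroup A] {a b : ℕ}
    (ha : ∀ (B : Type u) [AddCommGroup B], (∀ x : B, a • x = 0) → SolvableIn B m)
    (hb : ∀ (B : Type u) [AddCommGroup B], (∀ x : B, b • x = 0) → SolvableIn B m)
    (hA : ∀ x : A, (a * b) • x = 0) : SolvableIn A m := by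
  set H := (nsmulAddMonoidHom (α := A) a).range
  refine SolvableIn.of_addSubgroup H (hb H ?_) (ha (A ⧸ H) ?_)
  · rintro ⟨_, x, rfl⟩
    exact Subtype.ext (by simpa [← mul_nsmul] using hA x)
  · refine QuotientAddGroup.forall_mk.2 fun x => ?_
    rw [← QuotientAddGroup.mk_nsmul, QuotientAddGroup.eq_zero_iff]
    exact ⟨x, rfl⟩

end SolvableIn

/-- Every system of equations over an abelian group of bounded period `N`
which is p-nonsingular for all primes `p ∣ N` is solvable in the group itself. -/
theorem nonsingular_solvable_bounded_exponent (N : ℕ) (hN : 1 ≤ N)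
    {A : Type*} [AddCommGroup A] (hA : ∀ a : A, N • a = 0)
    {I J : Type*} (m : I → (J →₀ ℤ))
    (hli : ∀ p : ℕ, p.Prime → p ∣ N →
      LinearIndependent (ZMod p) (fun i => modRed p (m i)))
    (a : I → A) :
    ∃ f : (J →₀ ℤ) →+ A, ∀ i, f (m i) = a i := by
  induction N using Nat.recOnMul generalizing A with
  | zero => omega
  | one => exact ⟨0, fun i => by simpa using (hA (a i)).symm⟩
  | prime p hp =>
    have := Fact.mk hp
    exact solvableIn_of_prime_nsmul_eq_zero hA (hli p hp dvd_rfl) a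
  | mul x y ihx ihy =>
    refine solvableIn_of_mul_nsmul_eq_zero (fun B _ hB => ?_) (fun B _ hB => ?_) hA a
    · exact ihx (Nat.pos_of_mul_pos_right hN) hB fun p hp hpx => hli p hp (hpx.mul_right y)
    · exact ihy (Nat.pos_of_mul_pos_left hN) hB fun p hp hpy => hli p hp (hpy.mul_left x)
end

section
/- Let p be a prime and A an abelian p-group that is reduced (its only divisible subgroup is trivial) and of unbounded exponent (for every n there is a ∈ A with p^n·a ≠ 0). Then there exists a countable family {m_i}_{i∈I} of elements of a free abelian group M = ⊕_{j∈ℕ} ℤ·x_j, whose images in M/qM are linearly independent over ℤ/q for every prime q, and a family {a_i} in A, such that no group homomorphism f : M → A satisfies f(m_i) = a_i for all i. -/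
lemma modRed_apply (q : ℕ) {J : Type*} (v : J →₀ ℤ) (j : J) :
    modRed q v j = ((v j : ℤ) : ZMod q) := Finsupp.mapRange_apply

/-- The subgroup `p^m • A`. -/
def pA (p : ℕ) (A : Type*) [AddCommGroup A] (m : ℕ) : AddSubgroup A where
  carrier := {x | ∃ a : A, p ^ m • a = x}
  zero_mem' := ⟨0, smul_zero _⟩
  add_mem' := by rintro x y ⟨a, rfl⟩ ⟨b, rfl⟩; exact ⟨a + b, smul_add _ _ _⟩
  neg_mem' := by rintro x ⟨a, rfl⟩; exact ⟨-a, smul_neg _ _⟩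

/-- In a `p`-group, `p`-divisibility of a subgroup implies divisibility by all `n > 0`. -/
lemma divAll {A : Type*} [AddCommGroup A] {p : ℕ} (hp : p.Prime)
    (hpgroup : ∀ a : A, ∃ n : ℕ, p ^ n • a = 0)
    (B : AddSubgroup A) (hdiv : ∀ b ∈ B, ∃ c ∈ B, p • c = b) :
    ∀ n : ℕ, 0 < n → ∀ b ∈ B, ∃ c ∈ B, n • c = b := by
  have hprime : ∀ q : ℕ, q.Prime → ∀ b ∈ B, ∃ c ∈ B, q • c = b := by
    intro q hq b hb
    by_cases hqp : q = p
    · subst hqp; exact hdiv b hb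
    · obtain ⟨t, ht⟩ := hpgroup b
      have hcop : IsCoprime (q : ℤ) ((p : ℤ) ^ t) := by
        have : Nat.Coprime q (p ^ t) :=
          Nat.Coprime.pow_right t ((Nat.coprime_primes hq hp).mpr hqp)
        have := Nat.isCoprime_iff_coprime.mpr this
        simpa using this
      obtain ⟨u, v, huv⟩ := hcop
      refine ⟨u • b, B.zsmul_mem hb u, ?_⟩
      have h1 : (q : ℤ) • (u • b) = (u * q) • b := by
        rw [smul_smul, mul_comm]
      have h2 : (u * (q:ℤ) + v * (p:ℤ)^t) • b = b := by rw [huv, one_smul]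
      have h3 : ((p:ℤ)^t) • b = 0 := by
        have : ((p^t : ℕ) : ℤ) • b = (p^t : ℕ) • b := natCast_zsmul _ _
        push_cast at this
        rw [this, ht]
      calc q • (u • b) = (q : ℤ) • (u • b) := (natCast_zsmul _ _).symm
        _ = (u * (q:ℤ)) • b := h1
        _ = (u * (q:ℤ) + v * (p:ℤ)^t) • b - (v * (p:ℤ)^t) • b := by
            rw [add_smul]; abel
        _ = b - v • (((p:ℤ)^t) • b) := by rw [h2, mul_smul]
        _ = b := by rw [h3, smul_zero, sub_zero]
  intro n
  induction n using Nat.strong_induction_on with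
  | _ n ih =>
    intro hn b hb
    rcases eq_or_lt_of_le (Nat.one_le_iff_ne_zero.mpr (Nat.pos_iff_ne_zero.mp hn)) with h1 | h1
    · exact ⟨b, hb, by rw [← h1, one_smul]⟩
    · set q := n.minFac with hq
      have hqprime : q.Prime := Nat.minFac_prime (by omega)
      have hr : n / q < n := Nat.div_lt_self (by omega) hqprime.one_lt
      have hrpos : 0 < n / q := Nat.div_pos (Nat.minFac_le (by omega)) hqprime.pos
      obtain ⟨c1, hc1B, hc1⟩ := ih (n / q) hr hrpos b hb
      obtain ⟨c, hcB, hc⟩ := hprime q hqprime c1 hc1B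
      refine ⟨c, hcB, ?_⟩
      have hnq : n = (n / q) * q := (Nat.div_mul_cancel (Nat.minFac_dvd n)).symm
      rw [hnq, mul_smul, hc, hc1]

/-- Key step: one can always perturb `x` by an element of `p^n A` so that
`p^k • x` escapes `p^(n+k+1) A`. -/
lemma keyLemma {A : Type*} [AddCommGroup A] {p : ℕ} (hp : p.Prime)
    (hpgroup : ∀ a : A, ∃ n : ℕ, p ^ n • a = 0)
    (hred : ∀ B : AddSubgroup A,
      (∀ b ∈ B, ∀ n : ℕ, 0 < n → ∃ c ∈ B, n • c = b) → B = ⊥)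
    (hunbdd : ∀ n : ℕ, ∃ a : A, p ^ n • a ≠ 0)
    (n k : ℕ) (x : A) :
    ∃ a : A, p ^ k • (x + p ^ n • a) ∉ pA p A (n + k + 1) := by
  by_contra hcon
  push_neg at hcon
  have h0 : p ^ k • x ∈ pA p A (n + k + 1) := by simpa using hcon 0
  have hstep : ∀ a : A, p ^ (n + k) • a ∈ pA p A (n + k + 1) := by
    intro a
    have h1 := hcon a
    have h2 : p ^ k • (x + p ^ n • a) - p ^ k • x ∈ pA p A (n + k + 1) :=
      AddSubgroup.sub_mem _ h1 h0
    have h3 : p ^ k • (x + p ^ n • a) - p ^ k • x = p ^ (n + k) • a := by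
      rw [smul_add, smul_smul, ← pow_add, add_comm k n]
      abel
    rwa [h3] at h2
  set m := n + k with hm
  have hdiv : ∀ b ∈ pA p A m, ∃ c ∈ pA p A m, p • c = b := by
    rintro b ⟨a, rfl⟩
    obtain ⟨a', ha'⟩ := hstep a
    refine ⟨p ^ m • a', ⟨a', rfl⟩, ?_⟩
    calc p • (p ^ m • a') = p ^ (m+1) • a' := by rw [smul_smul, pow_succ, mul_comm]
      _ = p ^ m • a := ha'
  have hbot := hred (pA p A m) (fun b hb n hn => divAll hp hpgroup _ hdiv n hn b hb)
  obtain ⟨a, ha⟩ := hunbdd m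
  exact ha (by
    have : p ^ m • a ∈ pA p A m := ⟨a, rfl⟩
    rwa [hbot, AddSubgroup.mem_bot] at this)

/-- The system `e_i - p • e_{i+1}` is unimodular: linearly independent mod every prime. -/
lemma li_lemma (p q : ℕ) (hq : q.Prime) :
    LinearIndependent (ZMod q) (fun i : ℕ =>
      modRed q (Finsupp.single i 1 - (p : ℤ) • Finsupp.single (i+1) 1)) := by
  haveI := Fact.mk hq
  have hv : ∀ i j : ℕ,
      modRed q (Finsupp.single i 1 - (p : ℤ) • Finsupp.single (i+1) 1) j
        = (if i = j then (1 : ZMod q) else 0) - p * (if i + 1 = j then 1 else 0) := by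
    intro i j
    rw [modRed_apply, Finsupp.sub_apply, Finsupp.smul_apply, Finsupp.single_apply,
      Finsupp.single_apply]
    push_cast
    split_ifs <;> simp
  rw [linearIndependent_iff']
  intro s g hsum i
  induction i using Nat.strong_induction_on with
  | _ i ih =>
    intro hi
    have heval : (∑ j ∈ s, g j •
        modRed q (Finsupp.single j 1 - (p : ℤ) • Finsupp.single (j+1) 1)) i = 0 := by
      rw [hsum]; rfl
    rw [Finset.sum_apply'] at heval
    have hzero : ∀ j ∈ s, j ≠ i →
        (g j • modRed q (Finsupp.single j 1 - (p : ℤ) • Finsupp.single (j+1) 1)) i = 0 := by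
      intro j hj hne
      rw [Finsupp.smul_apply, hv j i, if_neg hne]
      by_cases hji : j + 1 = i
      · have : g j = 0 := ih j (by omega) hj
        simp [this]
      · simp [hji]
    rw [Finset.sum_eq_single_of_mem i hi hzero, Finsupp.smul_apply, hv i i,
      if_pos rfl, if_neg (by omega)] at heval
    simpa using heval

/-- Over a reduced abelian p-group of unbounded period there is a unimodular
system of equations with no solution in the group itself. -/
theorem reduced_p_group_unbounded_has_unsolvable_unimodular_system
    {p : ℕ} (hp : p.Prime) {A : Type*} [AddCommGroup A]
    (hpgroup : ∀ a : A, ∃ n : ℕ, p ^ n • a = 0)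
    (hred : ∀ B : AddSubgroup A,
      (∀ b ∈ B, ∀ n : ℕ, 0 < n → ∃ c ∈ B, n • c = b) → B = ⊥)
    (hunbdd : ∀ n : ℕ, ∃ a : A, p ^ n • a ≠ 0) :
    ∃ (m : ℕ → (ℕ →₀ ℤ)) (a : ℕ → A),
      (∀ q : ℕ, q.Prime →
        LinearIndependent (ZMod q) (fun i => modRed q (m i))) ∧
      ¬ ∃ f : (ℕ →₀ ℤ) →+ A, ∀ i, f (m i) = a i := by
  classical
  have key := keyLemma hp hpgroup hred hunbdd
  let s : ℕ → A := fun n =>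
    Nat.rec 0 (fun n sn => sn + p ^ n • Classical.choose (key n n sn)) n
  let a : ℕ → A := fun i => Classical.choose (key i i (s i))
  have hs : ∀ n, s (n + 1) = s n + p ^ n • a n := fun n => rfl
  have ha : ∀ k, p ^ k • s (k + 1) ∉ pA p A (k + k + 1) := by
    intro k
    have h := Classical.choose_spec (key k k (s k))
    rwa [hs k]
  refine ⟨fun i => Finsupp.single i 1 - (p : ℤ) • Finsupp.single (i+1) 1, a,
    fun q hq => li_lemma p q hq, ?_⟩
  rintro ⟨f, hf⟩
  set c : ℕ → A := fun i => f (Finsupp.single i 1) with hcdef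
  have hc : ∀ i, c i = a i + p • c (i + 1) := by
    intro i
    have h := hf i
    rw [map_sub, map_zsmul] at h
    have : c i - (p : ℤ) • c (i + 1) = a i := h
    rw [natCast_zsmul] at this
    rw [← this]; abel
  have hc0 : ∀ n, c 0 = s n + p ^ n • c n := by
    intro n
    induction n with
    | zero => show c 0 = 0 + p ^ 0 • c 0; rw [pow_zero, one_smul, zero_add]
    | succ n ihn =>
      rw [ihn, hc n, hs n, smul_add, smul_smul, ← pow_succ]
      abel
  obtain ⟨k, hk⟩ := hpgroup (c 0)
  refine ha k ⟨-(c (k + 1)), ?_⟩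
  have h1 := congrArg (fun y => p ^ k • y) (hc0 (k + 1))
  rw [hk, smul_add, smul_smul, ← pow_add] at h1
  have : p ^ (k + (k + 1)) • c (k + 1) = -(p ^ k • s (k + 1)) := by
    rw [eq_neg_iff_add_eq_zero, add_comm]; exact h1.symm
  rw [smul_neg, show k + k + 1 = k + (k + 1) by omega, this, neg_neg]
end

section
/- Let A be a reduced periodic (torsion) abelian group of unbounded exponent (there is no N with N·a = 0 for all a ∈ A). Then there exists a unimodular system of equations over A with no solution in A: a family {m_i} in a free abelian group M = ⊕_{j∈J} ℤ·x_j whose reductions mod q are ℤ/q-linearly independent for every prime q, and constants {a_i} in A, such that no homomorphism f : M → A sends each m_i to a_i. -/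
/-- Over a reduced periodic abelian group of unbounded period there is a
unimodular system of equations with no solution in the group itself. -/
theorem reduced_torsion_unbounded_has_unsolvable_unimodular_system
    {A : Type*} [AddCommGroup A]
    (htors : ∀ a : A, ∃ n : ℕ, 0 < n ∧ n • a = 0)
    (hred : ∀ B : AddSubgroup A,
      (∀ b ∈ B, ∀ n : ℕ, 0 < n → ∃ c ∈ B, n • c = b) → B = ⊥)
    (hunbdd : ¬ ∃ N : ℕ, 1 ≤ N ∧ ∀ a : A, N • a = 0) :
    ∃ (ι J : Type) (m : ι → (J →₀ ℤ)) (a : ι → A),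
      (∀ q : ℕ, q.Prime →
        LinearIndependent (ZMod q) (fun i => modRed q (m i))) ∧
      ¬ ∃ f : (J →₀ ℤ) →+ A, ∀ i, f (m i) = a i := by
  classical
  -- Step lemma: given current modulus `K` and partial sum `s`, and a target `M`,
  -- we can extend the chain so that `M • (new partial sum) ∉ (new modulus) • A`.
  have step : ∀ (M : ℕ) (Ks : ℕ × A), ∃ ka : ℕ × A, 0 < ka.1 ∧
      (0 < Ks.1 → 0 < M →
        ¬∃ y : A, M • (Ks.2 + Ks.1 • ka.2) = (Ks.1 * ka.1) • y) := by
    intro M ⟨K, s⟩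
    by_contra hc
    push_neg at hc
    obtain ⟨hK, hM, -⟩ := hc (1, 0) one_pos
    have h : ∀ k : ℕ, 0 < k → ∀ a : A, ∃ y : A, M • (s + K • a) = (K * k) • y :=
      fun k hk a => (hc (k, a) hk).2.2
    -- the subgroup of "divisible" elements
    let U : AddSubgroup A :=
      { carrier := {u | ∀ m : ℕ, 0 < m → ∃ y, u = m • y}
        zero_mem' := fun m hm => ⟨0, by simp⟩
        add_mem' := by
          rintro u v hu hv m hm
          obtain ⟨y₁, hy₁⟩ := hu m hm
          obtain ⟨y₂, hy₂⟩ := hv m hm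
          exact ⟨y₁ + y₂, by rw [hy₁, hy₂, smul_add]⟩
        neg_mem' := by
          rintro u hu m hm
          obtain ⟨y, hy⟩ := hu m hm
          exact ⟨-y, by rw [hy, smul_neg]⟩ }
    have hMK : ∀ a : A, (M * K) • a ∈ U := by
      intro a m hm
      obtain ⟨y₁, hy₁⟩ := h m hm a
      obtain ⟨y₂, hy₂⟩ := h m hm 0
      rw [smul_zero, add_zero] at hy₂
      rw [smul_add] at hy₁
      have e : (M * K) • a = (K * m) • (y₁ - y₂) := by
        rw [mul_smul, smul_sub, ← hy₂, ← hy₁]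
        abel
      exact ⟨K • (y₁ - y₂), by rw [e, mul_comm K m, mul_smul]⟩
    have hU : U = ⊥ := by
      apply hred
      intro b hb n hn
      obtain ⟨y, hy⟩ := hb (n * (M * K)) (by positivity)
      refine ⟨(M * K) • y, hMK y, ?_⟩
      rw [hy]
      exact (mul_smul n (M * K) y).symm
    apply hunbdd
    refine ⟨M * K, Nat.mul_pos hM hK, fun a => ?_⟩
    have := hMK a
    rw [hU] at this
    exact (AddSubgroup.mem_bot).1 this
  -- choice functions for the recursion
  choose g hg1 hg2 using step
  -- `F n = (Kₙ, sₙ)` : modulus and partial sum of the chain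
  let F : ℕ → ℕ × A := fun n =>
    Nat.rec ((1 : ℕ), (0 : A))
      (fun n Ks => (Ks.1 * (g (n + 1) Ks).1, Ks.2 + Ks.1 • (g (n + 1) Ks).2)) n
  have hFs : ∀ n, F (n + 1) =
      ((F n).1 * (g (n + 1) (F n)).1, (F n).2 + (F n).1 • (g (n + 1) (F n)).2) :=
    fun n => rfl
  have hFpos : ∀ n, 0 < (F n).1 := by
    intro n
    induction n with
    | zero => exact one_pos
    | succ n ih =>
      rw [hFs n]
      exact Nat.mul_pos ih (hg1 (n + 1) (F n))
  have hkey : ∀ n, ¬∃ y : A, (n + 1) • (F (n + 1)).2 = (F (n + 1)).1 • y := by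
    intro n
    have h := hg2 (n + 1) (F n) (hFpos n) n.succ_pos
    rw [hFs n]
    exact h
  -- the system
  set k : ℕ → ℕ := fun n => (g (n + 1) (F n)).1 with hk
  set aa : ℕ → A := fun n => (g (n + 1) (F n)).2 with haa
  refine ⟨ℕ, ℕ,
    fun n => Finsupp.single n 1 - Finsupp.single (n + 1) ((k n : ℤ)),
    aa, ?_, ?_⟩
  · -- unimodularity
    intro q hq
    rw [linearIndependent_iff']
    intro t g0 hsum
    have hv : ∀ j i : ℕ,
        (modRed q (Finsupp.single j 1 - Finsupp.single (j + 1) ((k j : ℤ)))) i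
          = (if j = i then (1 : ZMod q) else 0)
            - (if j + 1 = i then ((k j : ℤ) : ZMod q) else 0) := by
      intro j i
      simp [modRed, Finsupp.mapRange_apply, Finsupp.sub_apply, Finsupp.single_apply]
    have key : ∀ i, i ∈ t → g0 i = 0 := by
      intro i
      induction i using Nat.strong_induction_on with
      | _ i IH =>
        intro hi
        have hev : (∑ j ∈ t, g0 j •
            modRed q (Finsupp.single j 1 - Finsupp.single (j + 1) ((k j : ℤ)))) i
            = 0 := by rw [hsum]; rfl
        rw [Finsupp.finset_sum_apply] at hev
        simp only [Finsupp.smul_apply, hv, smul_sub, smul_ite, smul_zero,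
          smul_eq_mul, mul_one] at hev
        simp only [mul_sub, mul_ite, mul_one, mul_zero] at hev
        rw [Finset.sum_sub_distrib, Finset.sum_ite_eq' t i g0] at hev
        have h2 : (∑ j ∈ t, if j + 1 = i then g0 j * ((k j : ℤ) : ZMod q) else 0)
            = 0 := by
          rcases i with _ | i'
          · apply Finset.sum_eq_zero
            intro j hj
            simp
          · have : (∑ j ∈ t, if j + 1 = i' + 1 then g0 j * ((k j : ℤ) : ZMod q) else 0)
                = ∑ j ∈ t, if j = i' then g0 j * ((k j : ℤ) : ZMod q) else 0 := by
              apply Finset.sum_congr rfl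
              intro j hj
              simp
            rw [this, Finset.sum_ite_eq' t i' (fun j => g0 j * ((k j : ℤ) : ZMod q))]
            split
            · rename_i hmem
              rw [IH i' (Nat.lt_succ_self i') hmem, zero_mul]
            · rfl
        rw [h2, sub_zero, if_pos hi] at hev
        exact hev
    exact key
  · -- unsolvability
    rintro ⟨f, hf⟩
    set x : ℕ → A := fun n => f (Finsupp.single n 1) with hx
    have hrec : ∀ n, x n = aa n + k n • x (n + 1) := by
      intro n
      have h1 := hf n
      have h2 : f (Finsupp.single n 1 - Finsupp.single (n + 1) ((k n : ℤ)))
          = x n - k n • x (n + 1) := by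
        rw [map_sub]
        congr 1
        have : (Finsupp.single (n + 1) ((k n : ℤ)))
            = (k n : ℤ) • Finsupp.single (n + 1) (1 : ℤ) := by
          rw [Finsupp.smul_single, smul_eq_mul, mul_one]
        rw [this, map_zsmul, natCast_zsmul]
      rw [h2] at h1
      rw [← h1]
      abel
    have hchain : ∀ n, x 0 = (F n).2 + (F n).1 • x n := by
      intro n
      induction n with
      | zero => simp [F]
      | succ n ih =>
        rw [ih, hrec n, hFs n]
        simp only [smul_add, mul_smul]
        abel
    obtain ⟨M, hM0, hMx⟩ := htors (x 0)
    obtain ⟨n, rfl⟩ : ∃ n, M = n + 1 := ⟨M - 1, by omega⟩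
    have hch := hchain (n + 1)
    have hkk := hkey n
    set W := F (n + 1) with hW
    apply hkk
    refine ⟨-((n + 1) • x (n + 1)), ?_⟩
    rw [smul_neg]
    have h3 : (n + 1) • W.2 + W.1 • ((n + 1) • x (n + 1)) = 0 := by
      calc (n + 1) • W.2 + W.1 • ((n + 1) • x (n + 1))
          = (n + 1) • (W.2 + W.1 • x (n + 1)) := by
            rw [smul_add (n + 1) W.2 (W.1 • x (n + 1)),
              smul_comm W.1 (n + 1) (x (n + 1))]
        _ = (n + 1) • x 0 := by rw [← hch]
        _ = 0 := hMx
    exact eq_neg_of_add_eq_zero_left h3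
end

section
/- Every separable abelian p-group A containing an element a of order p^N has a cyclic direct summand of order at least p^N: there exist k ≥ N, an element b ∈ A of order p^k, and a subgroup B ≤ A with A = ⟨b⟩ ⊕ B. -/
/-!
The element `c = p ^ (N - 1) • a` has order `p`, so by separability it has a finite height `h`:
`c = p ^ h • b` with `c ∉ p ^ (h + 1) • A`. Then `b` has order `p ^ (h + 1)`, and so does its
image in `A ⧸ p ^ (h + 1) • A`. Sending that image to `1 / p ^ (h + 1)` in the divisible, hence
injective, group `ℚ ⧸ ℤ` and extending gives a character `χ` of `A` whose values are all
multiples of `χ b`; its kernel is a complement of `zmultiples b`.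
-/

open AddSubgroup

theorem AddCircle.mem_zmultiples_of_nsmul_eq_zero {𝕜 : Type*} [Field 𝕜] [LinearOrder 𝕜]
    [IsStrictOrderedRing 𝕜] {p : 𝕜} [Fact (0 < p)] {n : ℕ} (hn : 0 < n) {u : AddCircle p}
    (h : n • u = 0) : u ∈ zmultiples ((p / n : 𝕜) : AddCircle p) := by
  obtain ⟨m, -, rfl⟩ := (AddCircle.nsmul_eq_zero_iff hn).1 h
  rw [AddCircle.natCast_div_mul_eq_nsmul]
  exact nsmul_mem (mem_zmultiples _) m

theorem isCompl_zmultiples_ker {A G : Type*} [AddCommGroup A] [AddCommGroup G] (χ : A →+ G)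
    {b : A} (hrange : χ.range ≤ zmultiples (χ b)) (horder : addOrderOf (χ b) = addOrderOf b) :
    IsCompl (zmultiples b) χ.ker := by
  constructor
  · rw [disjoint_iff_inf_le]
    intro x hx
    obtain ⟨hx, hker⟩ := mem_inf.1 hx
    obtain ⟨t, rfl⟩ := mem_zmultiples_iff.1 hx
    rwa [AddMonoidHom.mem_ker, map_zsmul, ← addOrderOf_dvd_iff_zsmul_eq_zero, horder,
      addOrderOf_dvd_iff_zsmul_eq_zero] at hker
  · rw [codisjoint_iff_le_sup]
    intro x _
    obtain ⟨t, ht⟩ := mem_zmultiples_iff.1 (hrange ⟨x, rfl⟩)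
    refine mem_sup.2 ⟨t • b, ⟨t, rfl⟩, x - t • b, ?_, add_sub_cancel _ _⟩
    rw [AddMonoidHom.mem_ker, map_sub, map_zsmul, ht, sub_self]

theorem exists_addCircle_hom_of_addOrderOf_mk {A : Type*} [AddCommGroup A] {n : ℕ} (hn : 0 < n)
    {b : A} (hb : addOrderOf (b : A ⧸ (nsmulAddMonoidHom n : A →+ A).range) = n) :
    ∃ χ : A →+ AddCircle (1 : ℚ), χ b = ((1 / n : ℚ) : AddCircle (1 : ℚ)) ∧
      ∀ x, χ (n • x) = 0 := by
  set K := (nsmulAddMonoidHom n : A →+ A).range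
  have hu : addOrderOf ((1 / n : ℚ) : AddCircle (1 : ℚ)) = n :=
    AddCircle.addOrderOf_period_div hn
  let f : ZMod n →+ A ⧸ K :=
    ZMod.lift n ⟨zmultiplesHom _ (b : A ⧸ K), addOrderOf_dvd_iff_zsmul_eq_zero.1 (by rw [hb])⟩
  let g : ZMod n →+ AddCircle (1 : ℚ) :=
    ZMod.lift n ⟨zmultiplesHom _ ((1 / n : ℚ) : AddCircle (1 : ℚ)),
      addOrderOf_dvd_iff_zsmul_eq_zero.1 (by rw [hu])⟩
  have hf : Function.Injective f := (ZMod.lift_injective _).2 fun m hm => by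
    rwa [ZMod.intCast_zmod_eq_zero_iff_dvd, ← hb, addOrderOf_dvd_iff_zsmul_eq_zero]
  obtain ⟨ψ, hψ⟩ := (Module.Baer.of_divisible _).extension_property_addMonoidHom f hf g
  refine ⟨ψ.comp (QuotientAddGroup.mk' K), ?_, fun x => ?_⟩
  · simpa only [AddMonoidHom.comp_apply, QuotientAddGroup.mk'_apply, f, g, ZMod.lift_coe,
      zmultiplesHom_apply, one_zsmul]
      using DFunLike.congr_fun hψ ((1 : ℤ) : ZMod n)
  · rw [AddMonoidHom.comp_apply, QuotientAddGroup.mk'_apply,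
      (QuotientAddGroup.eq_zero_iff (n • x)).2 (AddMonoidHom.mem_range.2 ⟨x, rfl⟩), map_zero]

theorem exists_isCompl_zmultiples_of_addOrderOf_mk {A : Type*} [AddCommGroup A] {n : ℕ}
    (hn : 0 < n) {b : A} (hb : addOrderOf b = n)
    (hb' : addOrderOf (b : A ⧸ (nsmulAddMonoidHom n : A →+ A).range) = n) :
    ∃ B : AddSubgroup A, IsCompl (zmultiples b) B := by
  obtain ⟨χ, hχb, hχn⟩ := exists_addCircle_hom_of_addOrderOf_mk hn hb'
  refine ⟨χ.ker, isCompl_zmultiples_ker χ ?_ ?_⟩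
  · rintro _ ⟨x, rfl⟩
    rw [hχb]
    exact AddCircle.mem_zmultiples_of_nsmul_eq_zero hn (by rw [← map_nsmul, hχn])
  · rw [hχb, hb, AddCircle.addOrderOf_period_div hn]

theorem exists_pow_nsmul_eq_and_forall_pow_succ_nsmul_ne {A : Type*} [AddCommGroup A] {p : ℕ}
    {c : A} (hc : ¬ ∀ k : ℕ, ∃ x : A, p ^ k • x = c) :
    ∃ (h : ℕ) (b : A), p ^ h • b = c ∧ ∀ x : A, p ^ (h + 1) • x ≠ c := by
  by_contra! H
  refine hc fun k => ?_
  induction k with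
  | zero => exact ⟨c, one_nsmul c⟩
  | succ k ih =>
    obtain ⟨b, hb⟩ := ih
    exact H k b hb

theorem separable_p_group_has_large_cyclic_summand_general
    {p : ℕ} (hp : p.Prime) {A : Type*} [AddCommGroup A]
    (hsep : ∀ a : A, (∀ k : ℕ, ∃ x : A, p ^ k • x = a) → a = 0)
    (N : ℕ) (a : A) (ha : addOrderOf a = p ^ N) :
    ∃ (k : ℕ) (b : A) (B : AddSubgroup A), N ≤ k ∧ addOrderOf b = p ^ k ∧
      AddSubgroup.zmultiples b ⊓ B = ⊥ ∧ AddSubgroup.zmultiples b ⊔ B = ⊤ := by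
  rcases N.eq_zero_or_pos with rfl | hN
  · exact ⟨0, 0, ⊤, le_rfl, by simp, by simp, by simp⟩
  have : Fact p.Prime := ⟨hp⟩
  set c := p ^ (N - 1) • a with hc_def
  have hc0 : c ≠ 0 := nsmul_ne_zero_of_lt_addOrderOf (pow_ne_zero _ hp.ne_zero)
    (ha ▸ Nat.pow_lt_pow_right hp.one_lt (Nat.sub_lt hN one_pos))
  have hpc : p • c = 0 := by
    rw [hc_def, smul_smul, ← pow_succ', Nat.sub_add_cancel hN, ← ha, addOrderOf_nsmul_eq_zero]
  obtain ⟨h, b, hbc, hheight⟩ :=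
    exists_pow_nsmul_eq_and_forall_pow_succ_nsmul_ne fun hdiv => hc0 (hsep c hdiv)
  have hNh : N ≤ h + 1 := by
    by_contra! hlt
    refine hheight (p ^ (N - 1 - (h + 1)) • a) ?_
    rw [smul_smul, ← pow_add, Nat.add_sub_cancel' (by omega)]
  set K := (nsmulAddMonoidHom (p ^ (h + 1)) : A →+ A).range
  have hb : addOrderOf b = p ^ (h + 1) :=
    addOrderOf_eq_prime_pow (by rwa [hbc]) (by rw [pow_succ', mul_smul, hbc, hpc])
  have hb' : addOrderOf (b : A ⧸ K) = p ^ (h + 1) := by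
    refine addOrderOf_eq_prime_pow ?_ ?_
    · rw [← QuotientAddGroup.mk_nsmul, QuotientAddGroup.eq_zero_iff, hbc]
      rintro ⟨x, hx⟩
      exact hheight x hx
    · rw [← QuotientAddGroup.mk_nsmul, QuotientAddGroup.eq_zero_iff]
      exact ⟨b, rfl⟩
  obtain ⟨B, hB⟩ := exists_isCompl_zmultiples_of_addOrderOf_mk (pow_pos hp.pos _) hb hb'
  exact ⟨h + 1, b, B, hNh, hb, hB.inf_eq_bot, hB.sup_eq_top⟩

/-- A separable abelian p-group (no nonzero elements of infinite p-height)
containing an element of order `p^N` has a cyclic direct summand of order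
at least `p^N`. -/
theorem separable_p_group_has_large_cyclic_summand
    {p : ℕ} (hp : p.Prime) {A : Type*} [AddCommGroup A]
    (hpgroup : ∀ x : A, ∃ n : ℕ, p ^ n • x = 0)
    (hsep : ∀ a : A, (∀ k : ℕ, ∃ x : A, p ^ k • x = a) → a = 0)
    (N : ℕ) (a : A) (ha : addOrderOf a = p ^ N) :
    ∃ (k : ℕ) (b : A) (B : AddSubgroup A), N ≤ k ∧ addOrderOf b = p ^ k ∧
      AddSubgroup.zmultiples b ⊓ B = ⊥ ∧ AddSubgroup.zmultiples b ⊔ B = ⊤ :=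
  separable_p_group_has_large_cyclic_summand_general hp hsep N a ha
end

section
/- Let G be a divisible nilpotent group of nilpotency class s. Then every term Z_i(G) of the upper central series of G (1 ≤ i ≤ s) is divisible: for every z ∈ Z_i(G) and every positive integer n there exists w ∈ Z_i(G) with w^n = z. -/
/-!
If `⁅x, y⁆` is central then `⁅x, yⁿ⁆ = ⁅x, y⁆ⁿ = ⁅xⁿ, y⁆`. So for `x ∈ Z₂(G)` with `xⁿ` central,
`x` commutes with every `n`-th power, hence with everything when `G` is divisible. Passing to
`G ⧸ Z(G)` and inducting along the upper central series, in a divisible nilpotent group every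
`n`-th root of a central element is central. Now `z ∈ Z_{i+1}(G)` has, by induction in `G ⧸ Z(G)`,
an `n`-th root `w ∈ Z_{i+1}(G)` modulo the centre; multiplying `w` by an `n`-th root of the central
element `w⁻ⁿ z`, which is itself central, gives an `n`-th root of `z` in `Z_{i+1}(G)`.
-/

open scoped commutatorElement

def Group.IsDivisible (G : Type*) [Group G] : Prop :=
  ∀ g : G, ∀ n : ℕ, 0 < n → ∃ h : G, h ^ n = g

def Subgroup.IsDivisible {G : Type*} [Group G] (H : Subgroup G) : Prop :=
  ∀ z ∈ H, ∀ n : ℕ, 0 < n → ∃ w ∈ H, w ^ n = z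

theorem Group.IsDivisible.of_surjective {G H : Type*} [Group G] [Group H] (hG : IsDivisible G)
    {f : G →* H} (hf : Function.Surjective f) : IsDivisible H := by
  intro g n hn
  obtain ⟨g, rfl⟩ := hf g
  obtain ⟨h, rfl⟩ := hG g n hn
  exact ⟨f h, (map_pow f h n).symm⟩

namespace Subgroup

variable {G : Type*} [Group G]

theorem commutatorElement_pow_right_of_mem_center {x y : G} (h : ⁅x, y⁆ ∈ center G) (n : ℕ) :
    ⁅x, y ^ n⁆ = ⁅x, y⁆ ^ n := by
  induction n with
  | zero => simp
  | succ n ih =>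
    rw [pow_succ, commutatorElement_mul_right_eq_mul_conj, ih, mul_assoc _ (y ^ n),
      mem_center_iff.mp h (y ^ n), ← mul_assoc, mul_inv_cancel_right, pow_succ]

theorem commutatorElement_pow_left_of_mem_center {x y : G} (h : ⁅x, y⁆ ∈ center G) (n : ℕ) :
    ⁅x ^ n, y⁆ = ⁅x, y⁆ ^ n := by
  have h' : ⁅y, x⁆ ∈ center G := commutatorElement_inv x y ▸ inv_mem h
  rw [← commutatorElement_inv, commutatorElement_pow_right_of_mem_center h',
    ← commutatorElement_inv, inv_pow, inv_inv]

theorem mem_center_of_pow_mem_center_of_mem_upperCentralSeries_two (hG : Group.IsDivisible G)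
    {x : G} (hx : x ∈ upperCentralSeries G 2) {n : ℕ} (hn : 0 < n) (hxn : x ^ n ∈ center G) :
    x ∈ center G := by
  rw [mem_center_iff]
  intro g
  obtain ⟨y, rfl⟩ := hG g n hn
  have hxy : ⁅x, y⁆ ∈ center G := by
    simpa only [upperCentralSeries_one] using mem_upperCentralSeries_succ_iff.mp hx y
  have hxyn : ⁅x, y ^ n⁆ = 1 := by
    rw [commutatorElement_pow_right_of_mem_center hxy,
      ← commutatorElement_pow_left_of_mem_center hxy, commutatorElement_eq_one_iff_mul_comm,
      mem_center_iff.mp hxn y]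
  exact (commutatorElement_eq_one_iff_mul_comm.mp hxyn).symm

theorem mem_center_of_pow_mem_center_of_mem_upperCentralSeries (hG : Group.IsDivisible G)
    {k : ℕ} {x : G} (hx : x ∈ upperCentralSeries G k) {n : ℕ} (hn : 0 < n)
    (hxn : x ^ n ∈ center G) : x ∈ center G := by
  induction k generalizing G with
  | zero =>
    rw [upperCentralSeries_zero, mem_bot] at hx
    exact hx ▸ one_mem _
  | succ k ih =>
    have hxq : QuotientGroup.mk' (center G) x ∈ center (G ⧸ center G) := by
      refine ih (hG.of_surjective (QuotientGroup.mk'_surjective _)) ?_ ?_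
      · rwa [← mem_comap, comap_upperCentralSeries_quotient_center]
      · rw [← map_pow, QuotientGroup.mk'_apply, (QuotientGroup.eq_one_iff _).mpr hxn]
        exact one_mem _
    refine mem_center_of_pow_mem_center_of_mem_upperCentralSeries_two hG ?_ hn hxn
    rwa [← comap_upperCentralSeries_quotient_center, upperCentralSeries_one]

theorem mem_center_of_pow_mem_center [Group.IsNilpotent G] (hG : Group.IsDivisible G) {x : G}
    {n : ℕ} (hn : 0 < n) (hxn : x ^ n ∈ center G) : x ∈ center G := by
  obtain ⟨s, hs⟩ := Group.IsNilpotent.nilpotent G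
  exact mem_center_of_pow_mem_center_of_mem_upperCentralSeries hG (hs ▸ mem_top x) hn hxn

theorem upperCentralSeries_isDivisible [Group.IsNilpotent G] (hG : Group.IsDivisible G)
    (i : ℕ) : (upperCentralSeries G i).IsDivisible := by
  induction i generalizing G with
  | zero =>
    intro z hz n _
    rw [upperCentralSeries_zero, mem_bot] at hz
    exact ⟨1, one_mem _, by rw [hz, one_pow]⟩
  | succ i ih =>
    intro z hz n hn
    obtain ⟨wq, hwq, hwqn⟩ := ih (hG.of_surjective (QuotientGroup.mk'_surjective (center G)))
      (QuotientGroup.mk' (center G) z)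
      (by rwa [← mem_comap, comap_upperCentralSeries_quotient_center]) n hn
    obtain ⟨w, rfl⟩ := QuotientGroup.mk'_surjective (center G) wq
    have hw : w ∈ upperCentralSeries G (i + 1) := by
      rwa [← comap_upperCentralSeries_quotient_center, mem_comap]
    have hc : (w ^ n)⁻¹ * z ∈ center G := by
      rw [← QuotientGroup.ker_mk' (center G), MonoidHom.mem_ker, map_mul, map_inv, map_pow, hwqn,
        inv_mul_cancel]
    obtain ⟨x, hx⟩ := hG _ n hn
    have hxc : x ∈ center G := mem_center_of_pow_mem_center hG hn (hx ▸ hc)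
    have hx_mem : x ∈ upperCentralSeries G (i + 1) :=
      upperCentralSeries_mono G (Nat.le_add_left 1 i) ((upperCentralSeries_one G).symm ▸ hxc)
    have hwx : Commute w x := mem_center_iff.mp hxc w
    refine ⟨w * x, mul_mem hw hx_mem, ?_⟩
    rw [hwx.mul_pow, hx, mul_inv_cancel_left]

end Subgroup

theorem upperCentralSeries_divisible_general {G : Type*} [Group G]
    (hdiv : ∀ g : G, ∀ n : ℕ, 0 < n → ∃ h : G, h ^ n = g)
    (s : ℕ) (hs : upperCentralSeries G s = ⊤)
    (i : ℕ) :
    ∀ z ∈ upperCentralSeries G i, ∀ n : ℕ, 0 < n →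
      ∃ w ∈ upperCentralSeries G i, w ^ n = z :=
  haveI : Group.IsNilpotent G := ⟨s, hs⟩
  Subgroup.upperCentralSeries_isDivisible hdiv i

/-- In a divisible nilpotent group of class `s`, every term `Z_i(G)`
(`1 ≤ i ≤ s`) of the upper central series is divisible. -/
theorem upperCentralSeries_divisible {G : Type*} [Group G]
    (hdiv : ∀ g : G, ∀ n : ℕ, 0 < n → ∃ h : G, h ^ n = g)
    (s : ℕ) (hs : upperCentralSeries G s = ⊤)
    (i : ℕ) (hi1 : 1 ≤ i) (his : i ≤ s) :
    ∀ z ∈ upperCentralSeries G i, ∀ n : ℕ, 0 < n →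
      ∃ w ∈ upperCentralSeries G i, w ^ n = z :=
  upperCentralSeries_divisible_general hdiv s hs i
end

section
/- Let G be a divisible nilpotent group. Then its center Z(G) is divisible: for every z ∈ Z(G) and every positive integer n there exists w ∈ Z(G) with w^n = z. -/
/-!
If every element is an `n`-th power, the terms `Z_{i+1}` of the upper central series are closed
under `n`-th roots (`Z_0 = 1` is not, in the presence of torsion). Indeed, let `w ∈ Z_{j+2}` with
`w ^ n ∈ Z_{j+1}`. Modulo `Z_j` the commutator `⁅w, h⁆` is central, so
`⁅w, h ^ n⁆ ≡ ⁅w, h⁆ ^ n ≡ ⁅w ^ n, h⁆ ≡ 1`; as every element is some `h ^ n`, this puts `w` in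
`Z_{j+1}`. Descend from `Z_c = G`.
-/

open scoped commutatorElement

section Commutator

variable {G : Type*} [Group G]

theorem commutatorElement_pow_left_of_commute {a b : G} (h : Commute ⁅a, b⁆ a) (n : ℕ) :
    ⁅a ^ n, b⁆ = ⁅a, b⁆ ^ n := by
  induction n with
  | zero => simp
  | succ n ih =>
    rw [pow_succ', commutatorElement_mul_left_eq_conj_mul, ih, ((h.pow_left n).symm).eq,
      mul_inv_cancel_right, pow_succ]

theorem commutatorElement_pow_right_of_commute {a b : G} (h : Commute ⁅a, b⁆ b) (n : ℕ) :
    ⁅a, b ^ n⁆ = ⁅a, b⁆ ^ n := by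
  induction n with
  | zero => simp
  | succ n ih =>
    rw [pow_succ', commutatorElement_mul_right_eq_mul_conj, ih, mul_assoc _ b,
      ((h.pow_left n).symm).eq, ← mul_assoc, mul_inv_cancel_right, ← pow_succ']

end Commutator

namespace Subgroup

variable {G : Type*} [Group G] {n : ℕ} {w : G}

theorem mem_upperCentralSeries_succ_of_pow_mem_of_mem_add_two
    (hroot : Function.Surjective fun g : G => g ^ n) {j : ℕ}
    (hw : w ∈ upperCentralSeries G (j + 2)) (hwn : w ^ n ∈ upperCentralSeries G (j + 1)) :
    w ∈ upperCentralSeries G (j + 1) := by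
  rw [mem_upperCentralSeries_succ_iff]
  intro y
  obtain ⟨h, rfl⟩ := hroot y
  set π := QuotientGroup.mk' (upperCentralSeries G j)
  have hcentral : ∀ g, Commute ⁅π w, π h⁆ g := by
    have := (upperCentralSeriesStep_eq_comap_center (upperCentralSeries G j)).le (hw h)
    rw [mem_comap, map_commutatorElement] at this
    exact fun g => (mem_center_iff.mp this g).symm
  rw [← QuotientGroup.ker_mk' (upperCentralSeries G j), MonoidHom.mem_ker]
  calc π ⁅w, h ^ n⁆
      = ⁅π w, π h⁆ ^ n := by
        rw [map_commutatorElement, map_pow, commutatorElement_pow_right_of_commute (hcentral _)]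
    _ = π ⁅w ^ n, h⁆ := by
        rw [map_commutatorElement, map_pow, commutatorElement_pow_left_of_commute (hcentral _)]
    _ = 1 := (QuotientGroup.eq_one_iff _).mpr (hwn h)

theorem mem_upperCentralSeries_succ_of_pow_mem_of_mem
    (hroot : Function.Surjective fun g : G => g ^ n) {i k : ℕ}
    (hw : w ∈ upperCentralSeries G k) (hwn : w ^ n ∈ upperCentralSeries G (i + 1)) :
    w ∈ upperCentralSeries G (i + 1) := by
  induction k with
  | zero =>
    rw [upperCentralSeries_zero, mem_bot] at hw
    exact hw ▸ one_mem _
  | succ k ih =>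
    rcases le_or_gt k i with hki | hik
    · exact upperCentralSeries_mono G (by omega) hw
    · obtain ⟨j, rfl⟩ : ∃ j, k = j + 1 := ⟨k - 1, by omega⟩
      exact ih (mem_upperCentralSeries_succ_of_pow_mem_of_mem_add_two hroot hw
        (upperCentralSeries_mono G (by omega) hwn))

theorem mem_upperCentralSeries_succ_of_pow_mem [Group.IsNilpotent G]
    (hroot : Function.Surjective fun g : G => g ^ n) {i : ℕ}
    (hwn : w ^ n ∈ upperCentralSeries G (i + 1)) :
    w ∈ upperCentralSeries G (i + 1) := by
  obtain ⟨c, hc⟩ := Group.IsNilpotent.nilpotent G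
  exact mem_upperCentralSeries_succ_of_pow_mem_of_mem hroot (hc ▸ mem_top w) hwn

end Subgroup

/-- The center of a divisible nilpotent group is divisible. -/
theorem center_of_divisible_nilpotent_is_divisible
    {G : Type*} [Group G] [Group.IsNilpotent G]
    (hdiv : ∀ g : G, ∀ n : ℕ, 0 < n → ∃ h : G, h ^ n = g) :
    ∀ z ∈ Subgroup.center G, ∀ n : ℕ, 0 < n →
      ∃ w ∈ Subgroup.center G, w ^ n = z := by
  intro z hz n hn
  obtain ⟨w, rfl⟩ := hdiv z n hn
  refine ⟨w, ?_, rfl⟩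
  rw [← Subgroup.upperCentralSeries_one] at hz ⊢
  exact Subgroup.mem_upperCentralSeries_succ_of_pow_mem (fun g => hdiv g n hn) hz
end

section
/- Let G be a nontrivial abelian group of exponent 2 generated by an element a of order 2 (G = ⟨a⟩ ≅ ℤ/2). Then the system of equations {x_1² = a, x_{n+1}² = x_n for all n ≥ 1} over G has no solution in any finite group containing G: for every finite group H containing an element a of order 2, there is no sequence (x_n) in H with x_1² = a and x_{n+1}² = x_n for all n. -/
/-!
If `x₀ ^ p = a` and `x_{n+1} ^ p = xₙ`, then `xₙ ^ p ^ (n + 1) = a`. When `a` has prime order `p`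
this forces `orderOf xₙ = p ^ (n + 2)`, so the orders in the chain are unbounded, which no finite
group allows.
-/

def IsPowRootChain {M : Type*} [Monoid M] (p : ℕ) (a : M) (x : ℕ → M) : Prop :=
  x 0 ^ p = a ∧ ∀ n, x (n + 1) ^ p = x n

namespace IsPowRootChain

variable {M : Type*} [Monoid M] {p : ℕ} {a : M} {x : ℕ → M}

theorem pow_pow_succ (hx : IsPowRootChain p a x) (n : ℕ) : x n ^ p ^ (n + 1) = a := by
  induction n with
  | zero => simpa using hx.1
  | succ n ih => rw [pow_succ', pow_mul, hx.2 n, ih]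

theorem orderOf_eq [Fact p.Prime] (hx : IsPowRootChain p a x) (ha : orderOf a = p) (n : ℕ) :
    orderOf (x n) = p ^ (n + 2) := by
  have ha1 : a ≠ 1 := (orderOf_eq_prime_iff.mp ha).2
  refine orderOf_eq_prime_pow (by rwa [hx.pow_pow_succ n]) ?_
  rw [pow_succ, pow_mul, hx.pow_pow_succ n, ← ha, pow_orderOf_eq_one]

end IsPowRootChain

theorem not_isPowRootChain_of_finite {M : Type*} [Monoid M] [Finite M] {p : ℕ} [hp : Fact p.Prime]
    {a : M} (ha : orderOf a = p) (x : ℕ → M) : ¬ IsPowRootChain p a x := by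
  intro hx
  set N := Nat.card M
  have hbound : p ^ (N + 2) ≤ N := hx.orderOf_eq ha N ▸ orderOf_le_card
  have hgrowth : N < p ^ (N + 2) :=
    (Nat.lt_pow_self hp.out.one_lt).trans_le
      (Nat.pow_le_pow_right hp.out.pos (Nat.le_add_right N 2))
  exact absurd hbound (not_le.mpr hgrowth)

/-- The system `{x₁² = a, x_{n+1}² = x_n}` over `⟨a⟩ ≅ ℤ/2` has no solution
in any finite group containing an element `a` of order 2. -/
theorem infinite_system_unsolvable_in_finite_groups
    {H : Type*} [Group H] [Finite H] (a : H) (ha : orderOf a = 2) :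
    ¬ ∃ x : ℕ → H, x 0 ^ 2 = a ∧ ∀ n, x (n + 1) ^ 2 = x n :=
  fun ⟨x, hx⟩ => not_isPowRootChain_of_finite ha x hx
end
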